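/- Let f : ℝ → ℝ satisfy: (i) f belongs to the Newton class; (ii) the limits of f at +∞ and −∞ are infinite and of opposite signs; (iii) f has at least four real roots. Then there exist two disjoint nondegenerate compact intervals I₁ and I₂ on which f′ does not vanish, M_f is continuous on I₁ and on I₂, and M_f(I₁) ⊇ I₁ ∪ I₂ and M_f(I₂) ⊇ I₁ ∪ I₂. -/

import Mathlib

/-- `f` belongs to the Newton class: `f` is twice continuously differentiable,
roots of `f` are simple, and roots of `f'` are simple. -/
def NewtonClass (f : ℝ → ℝ) : Prop :=
  ContDiff ℝ 2 f ∧ (∀ x, f x = 0 → deriv f x ≠ 0) ∧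
    (∀ x, deriv f x = 0 → deriv (deriv f) x ≠ 0)

/-- The classical Newton approximation function `N_f(x) = x - f(x)/f'(x)`. -/
noncomputable def newtonFun (f : ℝ → ℝ) (x : ℝ) : ℝ :=
  x - f x / deriv f x

/-- The modified Newton approximation function
`M_f(x) = N_f(x) - f(N_f(x))/f'(x)`. -/
noncomputable def modNewtonFun (f : ℝ → ℝ) (x : ℝ) : ℝ :=
  newtonFun f x - f (newtonFun f x) / deriv f x

/-!
Rolle's theorem puts critical points between consecutive roots, so the simple roots `r₂` and
`r₃` lie in disjoint maximal intervals `(c, d)` free of critical points, with `f'(c) = f'(d) = 0`.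
On such an interval `f` is strictly monotone, so `f(c)` and `f(d)` are nonzero of opposite
signs. As `x → c⁺` the quotient `f(x)/f'(x)` blows up, `N_f(x)` escapes to infinity, and there
`f(N_f(x))` is infinite by the behaviour of `f` at `±∞`. Hence
`M_f(x) = x - (f(x) + f(N_f(x)))/f'(x)` tends to opposite infinities at the two ends of `(c, d)`,
and by the intermediate value theorem a compact subinterval of each of the two intervals is
mapped over any given compact interval, in particular over the hull of both.
-/

open Filter Set Topology

section ClosedGap

variable {α : Type*} [ConditionallyCompleteLinearOrder α] [TopologicalSpace α] [OrderTopology α]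
  {S : Set α} {a b r : α}

theorem IsClosed.exists_Ioo_subset_compl_left (hS : IsClosed S) (ha : a ∈ S) (har : a ≤ r)
    (hr : r ∉ S) : ∃ c ∈ S, a ≤ c ∧ c < r ∧ Ioo c r ⊆ Sᶜ := by
  have hK : IsCompact (S ∩ Icc a r) := isCompact_Icc.inter_left hS
  obtain ⟨hcS, hac, hcr⟩ := hK.sSup_mem ⟨a, ha, le_rfl, har⟩
  refine ⟨_, hcS, hac, hcr.lt_of_ne fun h => hr (h ▸ hcS), fun x hx hxS => ?_⟩
  exact hx.1.not_ge (le_csSup hK.bddAbove ⟨hxS, hac.trans hx.1.le, hx.2.le⟩)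

theorem IsClosed.exists_Ioo_subset_compl (hS : IsClosed S) (ha : a ∈ S) (hb : b ∈ S)
    (har : a ≤ r) (hrb : r ≤ b) (hr : r ∉ S) :
    ∃ c d, c ∈ S ∧ d ∈ S ∧ a ≤ c ∧ c < r ∧ r < d ∧ d ≤ b ∧ Ioo c d ⊆ Sᶜ := by
  obtain ⟨c, hcS, hac, hcr, hc⟩ := hS.exists_Ioo_subset_compl_left ha har hr
  obtain ⟨d, hdS, hbd, hdr, hd⟩ :=
    IsClosed.exists_Ioo_subset_compl_left (α := αᵒᵈ) hS hb hrb hr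
  refine ⟨c, d, hcS, hdS, hac, hcr, hdr, hbd, fun x hx => ?_⟩
  rcases lt_trichotomy x r with h | rfl | h
  · exact hc ⟨hx.1, h⟩
  · exact hr
  · exact hd ⟨hx.2, h⟩

end ClosedGap

def HasOppositeInfiniteLimits (g : ℝ → ℝ) (a b : ℝ) : Prop :=
  (Tendsto g (𝓝[>] a) atTop ∧ Tendsto g (𝓝[<] b) atBot) ∨
    (Tendsto g (𝓝[>] a) atBot ∧ Tendsto g (𝓝[<] b) atTop)

theorem HasOppositeInfiniteLimits.exists_Icc_subset_image {g : ℝ → ℝ} {a b : ℝ}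
    (hlim : HasOppositeInfiniteLimits g a b) (hab : a < b) (hg : ContinuousOn g (Ioo a b))
    (L R : ℝ) :
    ∃ u v, a < u ∧ u < v ∧ v < b ∧ Icc L R ⊆ g '' Icc u v := by
  obtain ⟨m, ham, hmb⟩ := exists_between hab
  have hleft : ∀ᶠ x in 𝓝[>] a, x ∈ Ioo a m := Ioo_mem_nhdsGT ham
  have hright : ∀ᶠ x in 𝓝[<] b, x ∈ Ioo m b := Ioo_mem_nhdsLT hmb
  obtain ⟨u, hu, v, hv, hLR⟩ :
      ∃ u ∈ Ioo a m, ∃ v ∈ Ioo m b, Icc L R ⊆ uIcc (g u) (g v) := by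
    rcases hlim with ⟨ha, hb⟩ | ⟨ha, hb⟩
    · obtain ⟨u, hgu, hu⟩ := ((ha.eventually_ge_atTop R).and hleft).exists
      obtain ⟨v, hgv, hv⟩ := ((hb.eventually_le_atBot L).and hright).exists
      exact ⟨u, hu, v, hv, (Icc_subset_Icc hgv hgu).trans Icc_subset_uIcc'⟩
    · obtain ⟨u, hgu, hu⟩ := ((ha.eventually_le_atBot L).and hleft).exists
      obtain ⟨v, hgv, hv⟩ := ((hb.eventually_ge_atTop R).and hright).exists
      exact ⟨u, hu, v, hv, (Icc_subset_Icc hgu hgv).trans Icc_subset_uIcc⟩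
  have huv : u < v := hu.2.trans hv.1
  have hIcc : uIcc u v = Icc u v := uIcc_of_le huv.le
  have hIVT := intermediate_value_uIcc (hg.mono (hIcc ▸ Icc_subset_Ioo hu.1 hv.2))
  rw [hIcc] at hIVT
  exact ⟨u, v, hu.1, huv, hv.2, hLR.trans hIVT⟩

section ModNewton

variable {f : ℝ → ℝ} {l : Filter ℝ} {c : ℝ}

theorem modNewtonFun_eq_sub_div (f : ℝ → ℝ) (x : ℝ) :
    modNewtonFun f x = x - (f x + f (newtonFun f x)) / deriv f x := by
  rw [modNewtonFun, add_div, sub_add_eq_sub_sub]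
  nth_rw 1 [newtonFun]

theorem modNewtonFun_neg (f : ℝ → ℝ) : modNewtonFun (fun x => -f x) = modNewtonFun f := by
  have hd : deriv (fun x => -f x) = fun x => -deriv f x := deriv.neg'
  have hN : newtonFun (fun x => -f x) = newtonFun f := by
    funext x
    simp only [newtonFun, hd, neg_div_neg_eq]
  funext x
  simp only [modNewtonFun, hN, hd, neg_div_neg_eq]

theorem continuousOn_modNewtonFun {s : Set ℝ} (hf : Continuous f)
    (hf' : ContinuousOn (deriv f) s) (hs : ∀ x ∈ s, deriv f x ≠ 0) :
    ContinuousOn (modNewtonFun f) s := by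
  have hN : ContinuousOn (newtonFun f) s := continuousOn_id.sub (hf.continuousOn.div hf' hs)
  exact hN.sub ((hf.comp_continuousOn hN).div hf' hs)

theorem tendsto_newtonFun_atTop (hf : ContinuousAt f c) (hl : l ≤ 𝓝 c)
    (hd : Tendsto (deriv f) l (𝓝[>] 0)) (hfc : f c < 0) : Tendsto (newtonFun f) l atTop := by
  have h : Tendsto (fun x => f x * (deriv f x)⁻¹) l atBot :=
    (hf.tendsto.mono_left hl).neg_mul_atTop hfc (tendsto_inv_nhdsGT_zero.comp hd)
  refine ((tendsto_id.mono_left hl).add_atTop (tendsto_neg_atBot_atTop.comp h)).congr fun x => ?_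
  simp [newtonFun, sub_eq_add_neg, div_eq_mul_inv]

theorem tendsto_newtonFun_atBot (hf : ContinuousAt f c) (hl : l ≤ 𝓝 c)
    (hd : Tendsto (deriv f) l (𝓝[>] 0)) (hfc : 0 < f c) : Tendsto (newtonFun f) l atBot := by
  have h : Tendsto (fun x => f x * (deriv f x)⁻¹) l atTop :=
    (hf.tendsto.mono_left hl).pos_mul_atTop hfc (tendsto_inv_nhdsGT_zero.comp hd)
  refine ((tendsto_id.mono_left hl).add_atBot (tendsto_neg_atTop_atBot.comp h)).congr fun x => ?_
  simp [newtonFun, sub_eq_add_neg, div_eq_mul_inv]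

theorem tendsto_modNewtonFun_atBot (hf : ContinuousAt f c) (hl : l ≤ 𝓝 c)
    (hd : Tendsto (deriv f) l (𝓝[>] 0)) (hfN : Tendsto (fun x => f (newtonFun f x)) l atTop) :
    Tendsto (modNewtonFun f) l atBot := by
  have h : Tendsto (fun x => (f x + f (newtonFun f x)) * (deriv f x)⁻¹) l atTop :=
    ((hf.tendsto.mono_left hl).add_atTop hfN).atTop_mul_atTop₀ (tendsto_inv_nhdsGT_zero.comp hd)
  refine ((tendsto_id.mono_left hl).add_atBot (tendsto_neg_atTop_atBot.comp h)).congr fun x => ?_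
  simp [modNewtonFun_eq_sub_div, sub_eq_add_neg, div_eq_mul_inv]

theorem tendsto_modNewtonFun_atTop (hf : ContinuousAt f c) (hl : l ≤ 𝓝 c)
    (hd : Tendsto (deriv f) l (𝓝[>] 0)) (hfN : Tendsto (fun x => f (newtonFun f x)) l atBot) :
    Tendsto (modNewtonFun f) l atTop := by
  have h : Tendsto (fun x => (f x + f (newtonFun f x)) * (deriv f x)⁻¹) l atBot :=
    ((hf.tendsto.mono_left hl).add_atBot hfN).atBot_mul_atTop₀ (tendsto_inv_nhdsGT_zero.comp hd)
  refine ((tendsto_id.mono_left hl).add_atTop (tendsto_neg_atBot_atTop.comp h)).congr fun x => ?_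
  simp [modNewtonFun_eq_sub_div, sub_eq_add_neg, div_eq_mul_inv]

theorem hasOppositeInfiniteLimits_modNewtonFun_of_deriv_pos (hf : ContDiff ℝ 1 f)
    {r d : ℝ} (hcr : c < r) (hrd : r < d) (hr : f r = 0) (hc : deriv f c = 0) (hd : deriv f d = 0)
    (hpos : ∀ x ∈ Ioo c d, 0 < deriv f x)
    (hlim : (Tendsto f atTop atTop ∧ Tendsto f atBot atBot) ∨
      (Tendsto f atTop atBot ∧ Tendsto f atBot atTop)) :
    HasOppositeInfiniteLimits (modNewtonFun f) c d := by
  have hcd : c < d := hcr.trans hrd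
  have hmono : StrictMonoOn f (Icc c d) := strictMonoOn_of_deriv_pos (convex_Icc c d)
    hf.continuous.continuousOn (by simpa only [interior_Icc] using hpos)
  have hfc : f c < 0 := hr ▸ hmono (left_mem_Icc.2 hcd.le) ⟨hcr.le, hrd.le⟩ hcr
  have hfd : 0 < f d := hr ▸ hmono ⟨hcr.le, hrd.le⟩ (right_mem_Icc.2 hcd.le) hrd
  have hf' : Continuous (deriv f) := hf.continuous_deriv le_rfl
  have hdc : Tendsto (deriv f) (𝓝[>] c) (𝓝[>] 0) :=
    tendsto_nhdsWithin_of_tendsto_nhds_of_eventually_within _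
      (hc ▸ (hf'.tendsto c).mono_left nhdsWithin_le_nhds)
      (by filter_upwards [Ioo_mem_nhdsGT hcd] using hpos)
  have hdd : Tendsto (deriv f) (𝓝[<] d) (𝓝[>] 0) :=
    tendsto_nhdsWithin_of_tendsto_nhds_of_eventually_within _
      (hd ▸ (hf'.tendsto d).mono_left nhdsWithin_le_nhds)
      (by filter_upwards [Ioo_mem_nhdsLT hcd] using hpos)
  have hfc' := hf.continuous.continuousAt (x := c)
  have hfd' := hf.continuous.continuousAt (x := d)
  have hNc := tendsto_newtonFun_atTop hfc' nhdsWithin_le_nhds hdc hfc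
  have hNd := tendsto_newtonFun_atBot hfd' nhdsWithin_le_nhds hdd hfd
  rcases hlim with ⟨hTop, hBot⟩ | ⟨hTop, hBot⟩
  · exact Or.inr ⟨tendsto_modNewtonFun_atBot hfc' nhdsWithin_le_nhds hdc (hTop.comp hNc),
      tendsto_modNewtonFun_atTop hfd' nhdsWithin_le_nhds hdd (hBot.comp hNd)⟩
  · exact Or.inl ⟨tendsto_modNewtonFun_atTop hfc' nhdsWithin_le_nhds hdc (hTop.comp hNc),
      tendsto_modNewtonFun_atBot hfd' nhdsWithin_le_nhds hdd (hBot.comp hNd)⟩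

theorem hasOppositeInfiniteLimits_modNewtonFun_of_deriv_ne_zero (hf : ContDiff ℝ 1 f)
    {r d : ℝ} (hcr : c < r) (hrd : r < d) (hr : f r = 0) (hc : deriv f c = 0) (hd : deriv f d = 0)
    (hne : ∀ x ∈ Ioo c d, deriv f x ≠ 0)
    (hlim : (Tendsto f atTop atTop ∧ Tendsto f atBot atBot) ∨
      (Tendsto f atTop atBot ∧ Tendsto f atBot atTop)) :
    HasOppositeInfiniteLimits (modNewtonFun f) c d := by
  rcases hasDerivWithinAt_forall_lt_or_forall_gt_of_forall_ne (convex_Ioo c d)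
    (fun x _ => (hf.differentiable one_ne_zero x).hasDerivAt.hasDerivWithinAt) hne with hneg | hpos
  · have hd' : deriv (fun x => -f x) = fun x => -deriv f x := deriv.neg'
    have h := hasOppositeInfiniteLimits_modNewtonFun_of_deriv_pos hf.neg hcr hrd (by simp [hr])
      (by simp [hd', hc]) (by simp [hd', hd]) (by simpa [hd'] using hneg)
      (by simpa [tendsto_neg_atTop_iff, tendsto_neg_atBot_iff, or_comm] using hlim)
    rwa [modNewtonFun_neg] at h
  · exact hasOppositeInfiniteLimits_modNewtonFun_of_deriv_pos hf hcr hrd hr hc hd hpos hlim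

theorem exists_Icc_subset_modNewtonFun_image (hf : ContDiff ℝ 1 f) {r d : ℝ} (hcr : c < r)
    (hrd : r < d) (hr : f r = 0) (hc : deriv f c = 0) (hd : deriv f d = 0)
    (hne : ∀ x ∈ Ioo c d, deriv f x ≠ 0)
    (hlim : (Tendsto f atTop atTop ∧ Tendsto f atBot atBot) ∨
      (Tendsto f atTop atBot ∧ Tendsto f atBot atTop)) (L R : ℝ) :
    ∃ u v, c < u ∧ u < v ∧ v < d ∧ (∀ x ∈ Icc u v, deriv f x ≠ 0) ∧
      ContinuousOn (modNewtonFun f) (Icc u v) ∧ Icc L R ⊆ modNewtonFun f '' Icc u v := by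
  have hM : ContinuousOn (modNewtonFun f) (Ioo c d) :=
    continuousOn_modNewtonFun hf.continuous (hf.continuous_deriv le_rfl).continuousOn hne
  obtain ⟨u, v, hcu, huv, hvd, hLR⟩ :=
    (hasOppositeInfiniteLimits_modNewtonFun_of_deriv_ne_zero hf hcr hrd hr hc hd hne hlim)
      |>.exists_Icc_subset_image (hcr.trans hrd) hM L R
  have hsub : Icc u v ⊆ Ioo c d := Icc_subset_Ioo hcu hvd
  exact ⟨u, v, hcu, huv, hvd, fun x hx => hne x (hsub hx), hM.mono hsub, hLR⟩

end ModNewton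

/-- If `f` is a Newton-class function, has infinite limits of opposite signs
at `±∞`, and has at least four real roots, then there exist two disjoint
nondegenerate compact intervals `I₁`, `I₂` on which `f'` does not vanish,
`M_f` is continuous on each of them, and `M_f(I₁)` and `M_f(I₂)` both contain
`I₁ ∪ I₂`. -/
theorem modNewtonFun_exists_two_covering_intervals
    (f : ℝ → ℝ)
    (hf : NewtonClass f)
    (hlim : (Filter.Tendsto f Filter.atTop Filter.atTop ∧
              Filter.Tendsto f Filter.atBot Filter.atBot) ∨
            (Filter.Tendsto f Filter.atTop Filter.atBot ∧
              Filter.Tendsto f Filter.atBot Filter.atTop))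
    (hroots : ∃ r₁ r₂ r₃ r₄ : ℝ, r₁ < r₂ ∧ r₂ < r₃ ∧ r₃ < r₄ ∧
      f r₁ = 0 ∧ f r₂ = 0 ∧ f r₃ = 0 ∧ f r₄ = 0) :
    ∃ a₁ b₁ a₂ b₂ : ℝ, a₁ < b₁ ∧ a₂ < b₂ ∧
      Disjoint (Set.Icc a₁ b₁) (Set.Icc a₂ b₂) ∧
      (∀ x ∈ Set.Icc a₁ b₁, deriv f x ≠ 0) ∧
      (∀ x ∈ Set.Icc a₂ b₂, deriv f x ≠ 0) ∧
      ContinuousOn (modNewtonFun f) (Set.Icc a₁ b₁) ∧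
      ContinuousOn (modNewtonFun f) (Set.Icc a₂ b₂) ∧
      Set.Icc a₁ b₁ ∪ Set.Icc a₂ b₂ ⊆ modNewtonFun f '' Set.Icc a₁ b₁ ∧
      Set.Icc a₁ b₁ ∪ Set.Icc a₂ b₂ ⊆ modNewtonFun f '' Set.Icc a₂ b₂ := by
  obtain ⟨r₁, r₂, r₃, r₄, h12, h23, h34, hf₁, hf₂, hf₃, hf₄⟩ := hroots
  obtain ⟨hC2, hsimple, -⟩ := hf
  have hC1 : ContDiff ℝ 1 f := hC2.of_le one_le_two
  have hcont : Continuous f := hC1.continuous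
  have hS : IsClosed {x | deriv f x = 0} :=
    isClosed_eq (hC1.continuous_deriv le_rfl) continuous_const
  obtain ⟨k₁, hk₁, hk₁0⟩ :=
    exists_deriv_eq_zero h12 hcont.continuousOn (hf₁.trans hf₂.symm)
  obtain ⟨k₂, hk₂, hk₂0⟩ :=
    exists_deriv_eq_zero h23 hcont.continuousOn (hf₂.trans hf₃.symm)
  obtain ⟨k₃, hk₃, hk₃0⟩ :=
    exists_deriv_eq_zero h34 hcont.continuousOn (hf₃.trans hf₄.symm)
  obtain ⟨c₁, d₁, hc₁, hd₁, -, hc₁r, hrd₁, hd₁k, hne₁⟩ :=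
    hS.exists_Ioo_subset_compl hk₁0 hk₂0 hk₁.2.le hk₂.1.le (hsimple r₂ hf₂)
  obtain ⟨c₂, d₂, hc₂, hd₂, hkc₂, hc₂r, hrd₂, -, hne₂⟩ :=
    hS.exists_Ioo_subset_compl hk₂0 hk₃0 hk₂.2.le hk₃.1.le (hsimple r₃ hf₃)
  obtain ⟨u₁, v₁, hcu₁, huv₁, hvd₁, hnz₁, hM₁, him₁⟩ :=
    exists_Icc_subset_modNewtonFun_image hC1 hc₁r hrd₁ hf₂ hc₁ hd₁ hne₁ hlim c₁ d₂
  obtain ⟨u₂, v₂, hcu₂, huv₂, hvd₂, hnz₂, hM₂, him₂⟩ :=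
    exists_Icc_subset_modNewtonFun_image hC1 hc₂r hrd₂ hf₃ hc₂ hd₂ hne₂ hlim c₁ d₂
  have hsub : Icc u₁ v₁ ∪ Icc u₂ v₂ ⊆ Icc c₁ d₂ :=
    union_subset (Icc_subset_Icc hcu₁.le (by linarith)) (Icc_subset_Icc (by linarith) hvd₂.le)
  refine ⟨u₁, v₁, u₂, v₂, huv₁, huv₂, ?_, hnz₁, hnz₂, hM₁, hM₂,
    hsub.trans him₁, hsub.trans him₂⟩
  exact disjoint_left.2 fun x hx₁ hx₂ => by linarith [hx₁.2, hx₂.1]
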